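/- arXiv:2110.03472 — 5 statements merged into one kernel-verified Lean document; each statement's English description precedes it below -/
import Mathlib

section
/- Let D be a triangulated category with a bounded t-structure and S a t-exact triangulated subcategory (i.e., a triangulated subcategory closed under the truncation σ^{≤0}). Then S is thick, i.e., closed under direct summands. -/
open CategoryTheory Limits Pretriangulated ZeroObject

universe v u

namespace Paper

variable {C : Type u} [Category.{v} C] [Preadditive C] [HasZeroObject C]
  [HasShift C ℤ] [∀ n : ℤ, (CategoryTheory.shiftFunctor C n).Additive] [Pretriangulated C]
  [HasBinaryBiproducts C]

/-- A class of objects closed under isomorphism. -/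
def ClosedIso (P : C → Prop) : Prop := ∀ ⦃X Y : C⦄, (X ≅ Y) → P X → P Y

/-- A class of objects closed under extensions. -/
def ExtClosed (P : C → Prop) : Prop :=
  ∀ T : Triangle C, T ∈ (distTriang C) → P T.obj₁ → P T.obj₃ → P T.obj₂

/-- A suspended subcategory: additive (iso-closed, contains 0, closed under finite sums via
extensions), closed under the suspension `Σ = ⟦1⟧` and under extensions. -/
structure Suspended (P : C → Prop) : Prop where
  iso : ClosedIso P
  zero : P 0
  shift : ∀ ⦃X : C⦄, P X → P (X⟦(1:ℤ)⟧)
  ext : ExtClosed P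

/-- A t-structure `(L, G) = (D^{≤0}, D^{>0})`: Hom-orthogonality, every object is an extension,
`L` is suspended; both classes are closed under isomorphism. -/
structure IsTStr (L G : C → Prop) : Prop where
  isoL : ClosedIso L
  isoG : ClosedIso G
  zeroL : L 0
  homZero : ∀ ⦃X Y : C⦄, L X → G Y → ∀ f : X ⟶ Y, f = 0
  trunc : ∀ X : C, ∃ (A B : C) (f : A ⟶ X) (g : X ⟶ B) (h : B ⟶ A⟦(1:ℤ)⟧),
    Triangle.mk f g h ∈ (distTriang C) ∧ L A ∧ G B
  shiftL : ∀ ⦃X : C⦄, L X → L (X⟦(1:ℤ)⟧)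
  extL : ExtClosed L

/-- The right orthogonal `U^{⊥₀}` of a class of objects. -/
def rightOrth (U : C → Prop) (Y : C) : Prop := ∀ X : C, U X → ∀ f : X ⟶ Y, f = 0

/-- `Y ∈ P^{⊥_{≤ m}}`: `Hom(P, Σ^i Y) = 0` for all `i ≤ m`. -/
def perpLe (P : C) (m : ℤ) (Y : C) : Prop := ∀ i : ℤ, i ≤ m → ∀ f : P ⟶ Y⟦i⟧, f = 0

/-- `Y ∈ P^{⊥_{> m}}`: `Hom(P, Σ^i Y) = 0` for all `i > m`. -/
def perpGt (P : C) (m : ℤ) (Y : C) : Prop := ∀ i : ℤ, m < i → ∀ f : P ⟶ Y⟦i⟧, f = 0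

/-- `Y ∈ P^{⊥_ℤ}`: `Hom(P, Σ^i Y) = 0` for all integers `i`. -/
def perpZ (P : C) (Y : C) : Prop := ∀ i : ℤ, ∀ f : P ⟶ Y⟦i⟧, f = 0

/-- `X ∈ ^{⊥_{>0}}P`: `Hom(X, Σ^i P) = 0` for all `i > 0`. -/
def leftPerpGt0 (P : C) (X : C) : Prop := ∀ i : ℤ, 0 < i → ∀ f : X ⟶ P⟦i⟧, f = 0

/-- `susp(P)`, the smallest suspended subcategory containing `P`. -/
def suspObj (P : C) (X : C) : Prop := ∀ U : C → Prop, Suspended U → U P → U X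

/-- An additive subcategory closed under direct summands. -/
structure AddSub (U : C → Prop) : Prop where
  iso : ClosedIso U
  zero : U 0
  biprod : ∀ X Y : C, U X → U Y → U (X ⊞ Y)
  summand : ∀ X Y : C, U (X ⊞ Y) → U X

/-- `add(P)`: the additive closure of `P` (finite direct sums of direct summands). -/
def addObj (P : C) (X : C) : Prop := ∀ U : C → Prop, AddSub U → U P → U X

/-- A thick triangulated subcategory. -/
structure ThickSub (U : C → Prop) : Prop where
  iso : ClosedIso U
  zero : U 0
  shift : ∀ ⦃X : C⦄, U X → ∀ n : ℤ, U (X⟦n⟧)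
  ext : ExtClosed U
  summand : ∀ X Y : C, U (X ⊞ Y) → U X

/-- `thick(P)`: the smallest thick subcategory containing `P`. -/
def thickObj (P : C) (X : C) : Prop := ∀ U : C → Prop, ThickSub U → U P → U X

/-- A triangulated subcategory (iso-closed, shift-closed both ways, extension-closed). -/
structure TriangSub (U : C → Prop) : Prop where
  iso : ClosedIso U
  zero : U 0
  shift : ∀ ⦃X : C⦄, U X → ∀ n : ℤ, U (X⟦n⟧)
  ext : ExtClosed U

/-- `P` is presilting: `Hom(P, Σ^n P) = 0` for all `n > 0`. -/
def Presilting (P : C) : Prop := ∀ n : ℤ, 0 < n → ∀ f : P ⟶ P⟦n⟧, f = 0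

/-- `P` is partial silting: `(susp(P), P^{⊥_{≤0}})` is a t-structure and
`susp(P) ⊆ P^{⊥_{>0}}`. -/
def PartialSilting (P : C) : Prop :=
  IsTStr (suspObj P) (perpLe P 0) ∧ ∀ X : C, suspObj P X → perpGt P 0 X

/-- `S` is silting: partial silting with `susp(S) = S^{⊥_{>0}}`. -/
def Silting (S : C) : Prop :=
  PartialSilting S ∧ ∀ X : C, suspObj S X ↔ perpGt S 0 X

/-- `X ∈ D^{≤ n}` for the t-structure with aisle `L`. -/
def DLe (L : C → Prop) (n : ℤ) (X : C) : Prop := L (X⟦n⟧)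

/-- `X ∈ D^{> m}` for the t-structure with co-aisle `G`. -/
def DGt (G : C → Prop) (m : ℤ) (X : C) : Prop := G (X⟦m⟧)

/-- The t-structure `(L, G)` is bounded. -/
def BoundedTStr (L G : C → Prop) : Prop :=
  ∀ X : C, (∃ n : ℤ, DLe L n X) ∧ (∃ m : ℤ, DGt G m X)

/-- `H` is (a choice of) the `i`-th cohomology `H^i(X) = σ^{≤ i} σ^{> i-1} X` of `X` with
respect to the t-structure `(L, G)`, expressed by the two truncation triangles. -/
def IsCohomAt (L G : C → Prop) (i : ℤ) (X H : C) : Prop :=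
  ∃ (A B B' : C) (f : A ⟶ X) (g : X ⟶ B) (h : B ⟶ A⟦(1:ℤ)⟧)
    (f' : H ⟶ B) (g' : B ⟶ B') (h' : B' ⟶ H⟦(1:ℤ)⟧),
    Triangle.mk f g h ∈ (distTriang C) ∧ DLe L (i-1) A ∧ DGt G (i-1) B ∧
    Triangle.mk f' g' h' ∈ (distTriang C) ∧ DLe L i H ∧ DGt G i B'

/-- The heart `D^0 = D^{≤0} ∩ D^{>-1}` of the t-structure `(L, G)`. -/
def Heart (L G : C → Prop) (X : C) : Prop := L X ∧ DGt G (-1) X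

/-- A t-exact subcategory: a triangulated subcategory closed under the truncation `σ^{≤0}`
of the t-structure `(L, G)`. -/
def TExactSub (L G : C → Prop) (S : C → Prop) : Prop :=
  TriangSub S ∧
    ∀ (X A B : C) (f : A ⟶ X) (g : X ⟶ B) (h : B ⟶ A⟦(1:ℤ)⟧),
      S X → Triangle.mk f g h ∈ (distTriang C) → L A → G B → S A


/-- The class of objects `U` admits coreflections: every object has a couniversal morphism
from `U`, i.e. the inclusion of `U` admits a right adjoint. -/
def HasCoreflections (U : C → Prop) : Prop :=
  ∀ X : C, ∃ (A : C) (ε : A ⟶ X), U A ∧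
    ∀ A' : C, U A' → ∀ g : A' ⟶ X, ∃! g' : A' ⟶ A, g' ≫ ε = g

/-- `X` is a `2_S`-term object: `X ∈ add(S) * Σ add(S)`. -/
def TwoTerm (S X : C) : Prop :=
  ∃ (S₁ S₀ : C) (f : S₁ ⟶ S₀) (g : S₀ ⟶ X) (h : X ⟶ S₁⟦(1:ℤ)⟧),
    Triangle.mk f g h ∈ (distTriang C) ∧ addObj S S₁ ∧ addObj S S₀

/-- `X` is indecomposable. -/
def Indec (X : C) : Prop :=
  ¬ IsZero X ∧ ∀ Y Z : C, (X ≅ Y ⊞ Z) → IsZero Y ∨ IsZero Z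

/-- `add(A)` is contravariantly finite: every object admits a right `add(A)`-approximation. -/
def ContravFinAdd (A : C) : Prop :=
  ∀ X : C, ∃ (Q : C) (q : Q ⟶ X), addObj A Q ∧
    ∀ Q' : C, addObj A Q' → ∀ g : Q' ⟶ X, ∃ g' : Q' ⟶ Q, g' ≫ q = g

/-- `S` is a bounded silting object. -/
def BoundedSilting (S : C) : Prop :=
  Silting S ∧ BoundedTStr (suspObj S) (perpLe S 0)

/-- Hom-finiteness of `C` over a field `k`. -/
def HomFinite (k : Type w) [Field k] [Linear k C] : Prop :=
  ∀ X Y : C, FiniteDimensional k (X ⟶ Y)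

/-- The Krull–Schmidt property: every object is a finite direct sum of objects with local
endomorphism rings. -/
def KrullSchmidt : Prop :=
  ∀ X : C, ∃ l : List C, (∀ Y ∈ l, IsLocalRing (End Y)) ∧
    Nonempty (X ≅ l.foldr (· ⊞ ·) 0)

/-- A wide subcategory of the heart of the t-structure `(L, G)`: closed under isomorphisms,
extensions, kernels and cokernels (the latter two expressed via cones and cohomology). -/
structure HeartWide (L G W : C → Prop) : Prop where
  sub : ∀ ⦃X : C⦄, W X → Heart L G X
  iso : ClosedIso W
  ext : ∀ (X Y Z : C) (f : X ⟶ Y) (g : Y ⟶ Z) (h : Z ⟶ X⟦(1:ℤ)⟧),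
    W X → W Z → Heart L G Y → Triangle.mk f g h ∈ (distTriang C) → W Y
  kerCoker : ∀ (X Y Z : C) (f : X ⟶ Y) (g : Y ⟶ Z) (h : Z ⟶ X⟦(1:ℤ)⟧),
    W X → W Y → Triangle.mk f g h ∈ (distTriang C) →
    (∀ K : C, IsCohomAt L G (-1) Z K → W K) ∧ (∀ Q : C, IsCohomAt L G 0 Z Q → W Q)

/-- The subgroup of relations defining `K₀` of the thick subcategory `S`. -/
def K0Rel (S : C → Prop) : AddSubgroup (FreeAbelianGroup C) :=
  AddSubgroup.closure
    {x | (∃ X : C, ¬ S X ∧ x = FreeAbelianGroup.of X) ∨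
      ∃ T : Triangle C, T ∈ (distTriang C) ∧ S T.obj₁ ∧ S T.obj₂ ∧ S T.obj₃ ∧
        x = FreeAbelianGroup.of T.obj₂ - FreeAbelianGroup.of T.obj₁
          - FreeAbelianGroup.of T.obj₃}

/-- The Grothendieck group of the (thick) subcategory `S`. -/
abbrev K0 (S : C → Prop) := FreeAbelianGroup C ⧸ K0Rel S

/-- The class `[X]` in the Grothendieck group. -/
def K0cls (S : C → Prop) (X : C) : K0 S :=
  QuotientAddGroup.mk (FreeAbelianGroup.of X)

/-- A `2_S`-term presilting sequence `(X₁, …, X_t)` in the ambient subcategory `Amb` with respect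
to the silting object `S`, defined recursively: the last term `X` is an indecomposable `2_S`-term
presilting object, and the truncated sequence is a `2_{σ^{>0}_X T}`-term presilting sequence in
`Amb ∩ X^{⊥_ℤ}`, where `T = X ⊕ Q` is the Bongartz completion of `X`. -/
inductive PresiltSeq : (C → Prop) → C → List C → Prop
  | nil (Amb : C → Prop) (S : C) : PresiltSeq Amb S []
  | cons (Amb : C → Prop) (S X : C) (l : List C)
      (hX : Amb X) (h2 : TwoTerm S X) (hpre : Presilting X) (hind : Indec X)
      -- Bongartz completion `T = X ⊞ Q`, via an approximation triangle `S → Q → X₀ → ΣS`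
      (Q X₀ : C) (i : S ⟶ Q) (p : Q ⟶ X₀) (β : X₀ ⟶ S⟦(1:ℤ)⟧)
      (hB : Triangle.mk i p β ∈ (distTriang C)) (hX₀ : addObj X X₀)
      (happrox : ∀ X' : C, addObj X X' → ∀ g : X' ⟶ S⟦(1:ℤ)⟧, ∃ g', g' ≫ β = g)
      -- the truncation `T' = σ^{>0}_X (X ⊞ Q)`
      (T' A : C) (f : A ⟶ X ⊞ Q) (g : X ⊞ Q ⟶ T') (h : T' ⟶ A⟦(1:ℤ)⟧)
      (hTr : Triangle.mk f g h ∈ (distTriang C)) (hA : suspObj X A) (hT' : perpLe X 0 T')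
      (hrest : PresiltSeq (fun Y => Amb Y ∧ perpZ X Y) T' l) :
      PresiltSeq Amb S (l ++ [X])

end Paper

/-!
Shift `X` into `D^{≤0} ∩ D^{>m}` and induct on `-m`. A sum of truncation triangles of `X⟦-1⟧`
and `Y⟦-1⟧` is a truncation triangle of `(X ⊞ Y)⟦-1⟧`, so by t-exactness both `A₁ ⊞ A₂` and
`B₁ ⊞ B₂` lie in `S`. The first pair is one degree shorter, so `A₁ ∈ S` by induction. The object
`B₁` lives in a single degree (`B₁ ∈ D^{>0}`, `B₁⟦1⟧ ∈ D^{≤0}`); for such a `B`, the cone of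
`0 ⊕ 𝟙` on `B ⊞ B₂` is `B ⊞ B⟦1⟧`, whose truncation triangle `B⟦1⟧ → B⟦1⟧ ⊞ B → B` puts
`B⟦1⟧` into `S`. Then `X⟦-1⟧`, an extension of `B₁` by `A₁`, lies in `S`.
-/

namespace Paper

section Shift

variable {C : Type u} [Category.{v} C] {P : C → Prop}

lemma ClosedIso.iff (hP : ClosedIso P) {X Y : C} (e : X ≅ Y) : P X ↔ P Y :=
  ⟨hP e, hP e.symm⟩

variable [HasShift C ℤ]

lemma ClosedIso.shift_shift_iff (hP : ClosedIso P) (X : C) {a b c : ℤ} (h : a + b = c) :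
    P (X⟦a⟧⟦b⟧) ↔ P (X⟦c⟧) :=
  hP.iff ((shiftFunctorAdd' C a b c h).app X).symm

lemma ClosedIso.shift_zero_iff (hP : ClosedIso P) (X : C) : P (X⟦(0:ℤ)⟧) ↔ P X :=
  hP.iff ((shiftFunctorZero C ℤ).app X)

end Shift

variable {C : Type u} [Category.{v} C] [Preadditive C] [HasZeroObject C]
  [HasShift C ℤ] [∀ n : ℤ, (CategoryTheory.shiftFunctor C n).Additive] [Pretriangulated C]

noncomputable def shiftBiprodIso (X Y : C) (n : ℤ) : (X ⊞ Y)⟦n⟧ ≅ X⟦n⟧ ⊞ Y⟦n⟧ :=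
  have := preservesBinaryBiproducts_of_preservesBiproducts (shiftFunctor C n)
  (shiftFunctor C n).mapBiprod X Y

noncomputable def piWalkingPairIso (f : WalkingPair → C) : ∏ᶜ f ≅ f .left ⊞ f .right :=
  HasLimit.isoOfNatIso (diagramIsoPair (Discrete.functor f)) ≪≫ (biprod.isoProd _ _).symm

lemma exists_distTriang_biprod {T₁ T₂ : Triangle C} (h₁ : T₁ ∈ distTriang C)
    (h₂ : T₂ ∈ distTriang C) :
    ∃ T ∈ distTriang C, Nonempty (T.obj₁ ≅ T₁.obj₁ ⊞ T₂.obj₁) ∧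
      Nonempty (T.obj₂ ≅ T₁.obj₂ ⊞ T₂.obj₂) ∧ Nonempty (T.obj₃ ≅ T₁.obj₃ ⊞ T₂.obj₃) :=
  ⟨productTriangle (pairFunction T₁ T₂),
    productTriangle_distinguished _ (by rintro ⟨⟩ <;> assumption),
    ⟨piWalkingPairIso _⟩, ⟨piWalkingPairIso _⟩, ⟨piWalkingPairIso _⟩⟩

section TriangSub

variable {S : C → Prop}

lemma TriangSub.shift_iff (hS : TriangSub S) {X : C} (n : ℤ) : S (X⟦n⟧) ↔ S X :=
  ⟨fun h => hS.iso (shiftShiftNeg X n) (hS.shift h (-n)), fun h => hS.shift h n⟩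

lemma TriangSub.mem_obj₃ (hS : TriangSub S) {T : Triangle C} (hT : T ∈ distTriang C)
    (h₁ : S T.obj₁) (h₂ : S T.obj₂) : S T.obj₃ :=
  hS.ext _ (rot_of_distTriang _ hT) h₂ (hS.shift h₁ 1)

/-- The cone of `0 ⊕ 𝟙 : X ⊞ Y ⟶ X ⊞ Y` is `X ⊞ X⟦1⟧`. -/
lemma TriangSub.biprod_shift_mem (hS : TriangSub S) {X Y : C} (h : S (X ⊞ Y)) :
    S (X ⊞ X⟦(1:ℤ)⟧) := by
  obtain ⟨T, hT, ⟨e₁⟩, ⟨e₂⟩, ⟨e₃⟩⟩ := exists_distTriang_biprod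
    (inv_rot_of_distTriang _ (binaryBiproductTriangle_distinguished X (X⟦(1:ℤ)⟧)))
    (contractible_distinguished Y)
  have h₁ : S T.obj₁ :=
    hS.iso (e₁ ≪≫ biprod.mapIso (shiftShiftNeg X (1:ℤ)) (Iso.refl Y)).symm h
  exact hS.iso (e₃ ≪≫ (isoBiprodZero (isZero_zero C)).symm)
    (hS.mem_obj₃ hT h₁ (hS.iso e₂.symm h))

end TriangSub

section TStructure

variable {L G : C → Prop}

lemma IsTStr.G_of_forall_hom_eq_zero (ht : IsTStr L G) {Y : C}
    (hY : ∀ P : C, L P → ∀ f : P ⟶ Y, f = 0) : G Y := by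
  obtain ⟨A, B, a, b, c, hT, hA, hB⟩ := ht.trunc Y
  obtain ⟨u, hu⟩ : ∃ u : A⟦(1:ℤ)⟧ ⟶ B, 𝟙 _ = u ≫ c := Triangle.coyoneda_exact₁ _ hT (𝟙 _) (by
    rw [Category.id_comp]
    exact (congrArg _ (hY A hA a)).trans (Functor.map_zero _ _ _))
  have hA1 : IsZero (A⟦(1:ℤ)⟧) := by
    rw [IsZero.iff_id_eq_zero, hu, ht.homZero (ht.shiftL hA) hB u, zero_comp]
  have hA0 : IsZero A :=
    ((shiftFunctor C (-1:ℤ)).map_isZero hA1).of_iso (shiftShiftNeg A (1:ℤ)).symm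
  have : IsIso b := (Triangle.isZero₁_iff_isIso₂ _ hT).1 hA0
  exact ht.isoG (asIso b).symm hB

lemma IsTStr.G_ext (ht : IsTStr L G) (T : Triangle C) (hT : T ∈ distTriang C)
    (h₁ : G T.obj₁) (h₃ : G T.obj₃) : G T.obj₂ :=
  ht.G_of_forall_hom_eq_zero fun _ hP f => by
    obtain ⟨u, rfl⟩ := Triangle.coyoneda_exact₂ _ hT f (ht.homZero hP h₃ _)
    rw [ht.homZero hP h₁ u, zero_comp]

lemma IsTStr.L_biprod (ht : IsTStr L G) {X Y : C} (hX : L X) (hY : L Y) : L (X ⊞ Y) :=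
  ht.extL _ (binaryBiproductTriangle_distinguished X Y) hX hY

lemma IsTStr.G_biprod (ht : IsTStr L G) {X Y : C} (hX : G X) (hY : G Y) : G (X ⊞ Y) :=
  ht.G_ext _ (binaryBiproductTriangle_distinguished X Y) hX hY

lemma IsTStr.G_shift_neg_one (ht : IsTStr L G) {Y : C} (hY : G Y) : G (Y⟦(-1:ℤ)⟧) :=
  ht.G_of_forall_hom_eq_zero fun _ hP f => (shiftFunctor C (1:ℤ)).map_injective <| by
    rw [Functor.map_zero, ← cancel_mono (shiftNegShift Y (1:ℤ)).hom, zero_comp]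
    exact ht.homZero (ht.shiftL hP) hY _

lemma IsTStr.dgt_anti (ht : IsTStr L G) {X : C} {a b : ℤ} (hab : a ≤ b) (hX : DGt G b X) :
    DGt G a X := by
  induction a, hab using Int.leInductionDown with
  | base => exact hX
  | pred n _ ih => exact (ht.isoG.shift_shift_iff X (by ring)).1 (ht.G_shift_neg_one ih)

lemma IsTStr.isZero_of_dgt (ht : IsTStr L G) {X : C} {m : ℤ} (hm : 0 ≤ m) (hL : L X)
    (hG : DGt G m X) : IsZero X := by
  have hG0 : G X := (ht.isoG.shift_zero_iff X).1 (ht.dgt_anti hm hG)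
  exact (IsZero.iff_id_eq_zero X).2 (ht.homZero hL hG0 _)

variable {A B X : C} {f : A ⟶ X⟦(-1:ℤ)⟧} {g : X⟦(-1:ℤ)⟧ ⟶ B} {h : B ⟶ A⟦(1:ℤ)⟧}

lemma IsTStr.dgt_of_truncation (ht : IsTStr L G) (hT : Triangle.mk f g h ∈ distTriang C)
    {m : ℤ} (hm : m ≤ 1) (hX : DGt G (m - 1) X) (hB : G B) : DGt G m A := by
  refine ht.G_ext _ (Triangle.shift_distinguished _ (inv_rot_of_distTriang _ hT) m) ?_ ?_
  · refine (ht.isoG.shift_shift_iff B (c := m - 1) (by ring)).2 ?_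
    exact ht.dgt_anti (b := 0) (by omega) ((ht.isoG.shift_zero_iff B).2 hB)
  · exact (ht.isoG.shift_shift_iff X (c := m - 1) (by ring)).2 hX

lemma IsTStr.L_shift_of_truncation (ht : IsTStr L G) (hT : Triangle.mk f g h ∈ distTriang C)
    (hX : L X) (hA : L A) : L (B⟦(1:ℤ)⟧) :=
  ht.extL _ (Triangle.shift_distinguished _ (rot_of_distTriang _ hT) 1)
    (ht.isoL (shiftNegShift X (1:ℤ)).symm hX) (ht.shiftL (ht.shiftL hA))

end TStructure

section TExact

variable {L G S : C → Prop}

lemma TExactSub.mem_obj₁ (hS : TExactSub L G S) {T : Triangle C} (hT : T ∈ distTriang C)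
    (h₂ : S T.obj₂) (h₁ : L T.obj₁) (h₃ : G T.obj₃) : S T.obj₁ :=
  hS.2 _ _ _ T.mor₁ T.mor₂ T.mor₃ h₂ hT h₁ h₃

lemma TExactSub.mem_obj₃ (hS : TExactSub L G S) {T : Triangle C} (hT : T ∈ distTriang C)
    (h₂ : S T.obj₂) (h₁ : L T.obj₁) (h₃ : G T.obj₃) : S T.obj₃ :=
  hS.1.mem_obj₃ hT (hS.mem_obj₁ hT h₂ h₁ h₃) h₂

lemma TExactSub.mem_of_biprod_mem_of_G_of_L_shift (hS : TExactSub L G S) {B B' : C}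
    (hB : G B) (hB1 : L (B⟦(1:ℤ)⟧)) (h : S (B ⊞ B')) : S B :=
  (hS.1.shift_iff 1).1 <| hS.mem_obj₁ (binaryBiproductTriangle_distinguished (B⟦(1:ℤ)⟧) B)
    (hS.1.iso (biprod.braiding _ _) (hS.1.biprod_shift_mem h)) hB1 hB

lemma TExactSub.mem_of_biprod_mem_of_dgt_sub_one (ht : IsTStr L G) (hS : TExactSub L G S)
    {m : ℤ} (hm : m ≤ 1) (ih : ∀ ⦃X Y : C⦄, S (X ⊞ Y) → L X → DGt G m X → DGt G m Y → S X)
    {X Y : C} (h : S (X ⊞ Y)) (hX : L X) (hXm : DGt G (m - 1) X)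
    (hYm : DGt G (m - 1) Y) : S X := by
  obtain ⟨A₁, B₁, f₁, g₁, h₁, hX₁, hA₁, hB₁⟩ := ht.trunc (X⟦(-1:ℤ)⟧)
  obtain ⟨A₂, B₂, f₂, g₂, h₂, hY₁, hA₂, hB₂⟩ := ht.trunc (Y⟦(-1:ℤ)⟧)
  obtain ⟨T, hT, ⟨e₁⟩, ⟨e₂⟩, ⟨e₃⟩⟩ := exists_distTriang_biprod hX₁ hY₁
  have hST : S T.obj₂ := hS.1.iso (shiftBiprodIso X Y (-1) ≪≫ e₂.symm) (hS.1.shift h (-1))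
  have hTL : L T.obj₁ := ht.isoL e₁.symm (ht.L_biprod hA₁ hA₂)
  have hTG : G T.obj₃ := ht.isoG e₃.symm (ht.G_biprod hB₁ hB₂)
  have hSA₁ : S A₁ := ih (hS.1.iso e₁ (hS.mem_obj₁ hT hST hTL hTG)) hA₁
    (ht.dgt_of_truncation hX₁ hm hXm hB₁) (ht.dgt_of_truncation hY₁ hm hYm hB₂)
  have hSB₁ : S B₁ := hS.mem_of_biprod_mem_of_G_of_L_shift hB₁
    (ht.L_shift_of_truncation hX₁ hX hA₁) (hS.1.iso e₃ (hS.mem_obj₃ hT hST hTL hTG))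
  exact (hS.1.shift_iff (-1)).1 (hS.1.ext _ hX₁ hSA₁ hSB₁)

lemma TExactSub.mem_of_biprod_mem_of_dgt (ht : IsTStr L G) (hS : TExactSub L G S) (m : ℤ) :
    ∀ ⦃X Y : C⦄, S (X ⊞ Y) → L X → DGt G m X → DGt G m Y → S X := by
  have of_nonneg : ∀ k : ℤ, 0 ≤ k →
      ∀ ⦃X Y : C⦄, S (X ⊞ Y) → L X → DGt G k X → DGt G k Y → S X :=
    fun _ hk _ _ _ hX hXk _ => hS.1.iso (ht.isZero_of_dgt hk hX hXk).isoZero.symm hS.1.zero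
  rcases le_total 0 m with hm | hm
  · exact of_nonneg m hm
  · induction m, hm using Int.leInductionDown with
    | base => exact of_nonneg 0 le_rfl
    | pred n hn ih => exact fun _ _ => hS.mem_of_biprod_mem_of_dgt_sub_one ht (by omega) ih

end TExact

variable {C : Type u} [Category.{v} C] [Preadditive C] [HasZeroObject C]
  [HasShift C ℤ] [∀ n : ℤ, (CategoryTheory.shiftFunctor C n).Additive] [Pretriangulated C]
  [HasBinaryBiproducts C]

/-- A t-exact triangulated subcategory of a triangulated category with a
bounded t-structure is thick, i.e. closed under direct summands. -/
theorem statement2 (L G : C → Prop) (ht : IsTStr L G) (hb : BoundedTStr L G)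
    (S : C → Prop) (hS : TExactSub L G S) :
    ∀ X Y : C, S (X ⊞ Y) → S X := by
  intro X Y h
  obtain ⟨⟨a, haX⟩, ⟨b, hbX⟩⟩ := hb X
  obtain ⟨⟨-, -⟩, ⟨b', hbY⟩⟩ := hb Y
  have hXY : S (X⟦a⟧ ⊞ Y⟦a⟧) := hS.1.iso (shiftBiprodIso X Y a) (hS.1.shift h a)
  have hG : ∀ {Z : C} {c : ℤ}, min b b' ≤ c → DGt G c Z → DGt G (min b b' - a) (Z⟦a⟧) :=
    fun hc hZ => (ht.isoG.shift_shift_iff _ (by ring)).2 (ht.dgt_anti hc hZ)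
  exact (hS.1.shift_iff a).1 (hS.mem_of_biprod_mem_of_dgt ht _ hXY haX
    (hG (min_le_left _ _) hbX) (hG (min_le_right _ _) hbY))

end Paper
end

section
/- Let D be a triangulated category. An object P of D is partial silting if and only if P is presilting (Hom(P, Σ^n P) = 0 for all n > 0) and the smallest suspended subcategory susp(P) containing P is an aisle (i.e., the inclusion susp(P) → D admits a right adjoint). -/
open CategoryTheory Limits Pretriangulated ZeroObject

universe v u

/-! If `(susp P, P^{⊥≤0})` is a t-structure, the truncation triangle `A → X → B → ΣA` exhibits
`A → X` as a coreflection, because `susp P` has no nonzero maps to `B` or to `Σ⁻¹B`.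

Conversely, complete a coreflection `ε : A → X` to a triangle `A → X → B → ΣA` and let
`u : Σᵐ P → B` with `m ≥ 0`. The composite `Σᵐ P → B → ΣA` vanishes: for `m = 0` because
`A ∈ susp P ⊆ P^{⊥>0}` when `P` is presilting, for `m > 0` because it is the suspension of a map
`Σᵐ⁻¹ P → A` killed by `ε`, hence zero by uniqueness of lifts. So `u` factors through `X → B`
and then through `ε`, and `u = 0`; that is, `B ∈ P^{⊥≤0}`. -/

namespace Paper

def IsCoreflection {C : Type u} [Category.{v} C] (U : C → Prop) {A X : C} (ε : A ⟶ X) : Prop :=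
  U A ∧ ∀ A' : C, U A' → ∀ g : A' ⟶ X, ∃! g' : A' ⟶ A, g' ≫ ε = g

section

variable {C : Type u} [Category.{v} C] [Preadditive C] [HasShift C ℤ]

lemma perpLe_closedIso (P : C) (m : ℤ) : ClosedIso (perpLe P m) := fun _ _ e hX i hi f =>
  (Preadditive.IsIso.comp_right_eq_zero f ((shiftFunctor C i).map e.inv)).1 (hX i hi _)

lemma perpLe_shift {P Y : C} {m : ℤ} (hY : perpLe P m Y) {j n : ℤ} (hjn : n + j ≤ m) :
    perpLe P n (Y⟦j⟧) := fun i hi f =>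
  (Preadditive.IsIso.comp_right_eq_zero f ((shiftFunctorAdd' C j i (j + i) rfl).inv.app Y)).1
    (hY _ (by omega) _)

variable [∀ n : ℤ, (shiftFunctor C n).Additive]

lemma perpLe_of_shift_hom_eq_zero {P Y : C} {n : ℤ}
    (h : ∀ m : ℤ, -n ≤ m → ∀ u : P⟦m⟧ ⟶ Y, u = 0) : perpLe P n Y := fun i hi f => by
  rw [← (shiftFunctor C (-i)).map_eq_zero_iff, ← Preadditive.IsIso.comp_right_eq_zero _
    ((shiftFunctorCompIsoId C i (-i) (by omega)).hom.app Y)]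
  exact h (-i) (by omega) _

variable [HasZeroObject C] [Pretriangulated C]

lemma suspObj_self (P : C) : suspObj P P := fun _ _ hP => hP

lemma suspended_suspObj (P : C) : Suspended (suspObj P) where
  iso _ _ e hX U hU hP := hU.iso e (hX U hU hP)
  zero _ hU _ := hU.zero
  shift _ hX U hU hP := hU.shift (hX U hU hP)
  ext T hT h₁ h₃ U hU hP := hU.ext T hT (h₁ U hU hP) (h₃ U hU hP)

lemma suspObj_shift (P : C) {m : ℤ} (hm : 0 ≤ m) : suspObj P (P⟦m⟧) := by
  induction m, hm using Int.leInduction with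
  | base => exact (suspended_suspObj P).iso ((shiftFunctorZero C ℤ).app P).symm (suspObj_self P)
  | succ n _ ih =>
    exact (suspended_suspObj P).iso ((shiftFunctorAdd' C n 1 (n + 1) rfl).app P).symm
      ((suspended_suspObj P).shift ih)

lemma suspended_perpGt (P : C) (m : ℤ) : Suspended (perpGt P m) where
  iso _ _ e hX i hi f :=
    (Preadditive.IsIso.comp_right_eq_zero f ((shiftFunctor C i).map e.inv)).1 (hX i hi _)
  zero i _ f := ((shiftFunctor C i).map_isZero (isZero_zero C)).eq_of_tgt f 0
  shift X hX i hi f :=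
    (Preadditive.IsIso.comp_right_eq_zero f ((shiftFunctorAdd' C 1 i (1 + i) rfl).inv.app X)).1
      (hX _ (by omega) _)
  ext T hT h₁ h₃ i hi f := by
    obtain ⟨k, rfl⟩ :=
      Triangle.coyoneda_exact₂ _ (Triangle.shift_distinguished T hT i) f (h₃ i hi _)
    rw [h₁ i hi k]
    exact zero_comp

lemma suspObj_subset_perpGt {P X : C} (hP : Presilting P) (hX : suspObj P X) : perpGt P 0 X :=
  hX _ (suspended_perpGt P 0) hP

lemma suspended_leftOrth {G : C → Prop} (hG : ∀ ⦃Y⦄, G Y → G (Y⟦(-1 : ℤ)⟧)) :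
    Suspended (fun X => ∀ Y, G Y → ∀ f : X ⟶ Y, f = 0) where
  iso _ _ e hX Y hY f := (Preadditive.IsIso.comp_left_eq_zero e.hom f).1 (hX Y hY _)
  zero _ _ f := (isZero_zero C).eq_of_src f 0
  shift X hX Y hY f := by
    rw [← (shiftFunctor C (-1 : ℤ)).map_eq_zero_iff, ← Preadditive.IsIso.comp_left_eq_zero
      ((shiftFunctorCompIsoId C (1 : ℤ) (-1) (by norm_num)).inv.app X)]
    exact hX _ (hG hY) _
  ext T hT h₁ h₃ Y hY f := by
    obtain ⟨k, rfl⟩ := Triangle.yoneda_exact₂ T hT f (h₁ Y hY _)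
    rw [h₃ Y hY k, comp_zero]

lemma rightOrth_suspObj_of_perpLe {P Y : C} (hY : perpLe P 0 Y) : rightOrth (suspObj P) Y := by
  intro X hX
  refine hX _ (suspended_leftOrth (G := perpLe P 0) fun _ hY' => perpLe_shift hY' (by norm_num))
    ?_ Y hY
  intro Y' hY' f
  exact (Preadditive.IsIso.comp_right_eq_zero f ((shiftFunctorZero C ℤ).inv.app Y')).1
    (hY' 0 le_rfl _)

lemma isCoreflection_of_distTriang {U : C → Prop} {A X B : C} {f : A ⟶ X} {g : X ⟶ B}
    {h : B ⟶ A⟦(1 : ℤ)⟧} (hT : Triangle.mk f g h ∈ distTriang C) (hA : U A)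
    (hB : ∀ A', U A' → ∀ u : A' ⟶ B, u = 0)
    (hB' : ∀ A', U A' → ∀ u : A' ⟶ B⟦(-1 : ℤ)⟧, u = 0) : IsCoreflection U f := by
  refine ⟨hA, fun A' hA' g₀ => ?_⟩
  obtain ⟨g', hg'⟩ : ∃ g' : A' ⟶ A, g₀ = g' ≫ f :=
    Triangle.coyoneda_exact₂ _ hT g₀ (hB A' hA' _)
  refine ⟨g', hg'.symm, fun y hy => ?_⟩
  have hdiff : (y - g') ≫ f = 0 := by
    rw [Preadditive.sub_comp, hy]
    exact sub_eq_zero.2 hg'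
  obtain ⟨k, hk⟩ := Triangle.coyoneda_exact₂ _ (inv_rot_of_distTriang _ hT) (y - g') hdiff
  rw [← sub_eq_zero, hk, hB' A' hA' k]
  exact zero_comp

lemma IsTStr.hasCoreflections {L G : C → Prop} (hLG : IsTStr L G)
    (hG : ∀ ⦃Y⦄, G Y → G (Y⟦(-1 : ℤ)⟧)) : HasCoreflections L := fun X => by
  obtain ⟨A, B, f, g, h, hT, hA, hB⟩ := hLG.trunc X
  exact ⟨A, f, isCoreflection_of_distTriang hT hA (fun _ hA' => hLG.homZero hA' hB)
    (fun _ hA' => hLG.homZero hA' (hG hB))⟩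

section Cone

variable {U : C → Prop} {A X B : C} {ε : A ⟶ X} {g : X ⟶ B} {h : B ⟶ A⟦(1 : ℤ)⟧}

lemma IsCoreflection.eq_zero_of_comp_eq_zero (hε : IsCoreflection U ε)
    (hT : Triangle.mk ε g h ∈ distTriang C) {Y : C} (hY : U Y) {u : Y ⟶ B} (hu : u ≫ h = 0) :
    u = 0 := by
  obtain ⟨v, rfl⟩ : ∃ v : Y ⟶ X, u = v ≫ g := Triangle.coyoneda_exact₃ _ hT u hu
  obtain ⟨w, rfl, -⟩ := hε.2 Y hY v
  have hεg : ε ≫ g = 0 := comp_distTriang_mor_zero₁₂ _ hT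
  rw [Category.assoc, hεg, comp_zero]

lemma IsCoreflection.comp_eq_zero_of_shift (hε : IsCoreflection U ε)
    (hT : Triangle.mk ε g h ∈ distTriang C) {Z : C} (hZ : U Z) (u : Z⟦(1 : ℤ)⟧ ⟶ B) :
    u ≫ h = 0 := by
  obtain ⟨v, hv⟩ := (shiftFunctor C (1 : ℤ)).map_surjective (u ≫ h)
  have hhε : h ≫ ε⟦(1 : ℤ)⟧' = 0 := comp_distTriang_mor_zero₃₁ _ hT
  have hvε : v ≫ ε = 0 := by
    rw [← (shiftFunctor C (1 : ℤ)).map_eq_zero_iff, Functor.map_comp, hv, Category.assoc, hhε,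
      comp_zero]
  rw [← hv, (hε.2 Z hZ 0).unique hvε zero_comp, Functor.map_zero]

lemma perpLe_of_isCoreflection {P : C} (hP : Presilting P) (hε : IsCoreflection (suspObj P) ε)
    (hT : Triangle.mk ε g h ∈ distTriang C) : perpLe P 0 B := by
  refine perpLe_of_shift_hom_eq_zero fun m hm u => ?_
  rcases (show (0 : ℤ) ≤ m by omega).eq_or_lt with rfl | hpos
  · refine hε.eq_zero_of_comp_eq_zero hT (suspObj_shift P le_rfl) ?_
    rw [← Preadditive.IsIso.comp_left_eq_zero ((shiftFunctorZero C ℤ).inv.app P)]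
    exact suspObj_subset_perpGt hP hε.1 1 one_pos _
  · have hP' := suspObj_shift P (show 0 ≤ m - 1 by omega)
    let e := (shiftFunctorAdd' C (m - 1) 1 m (by omega)).app P
    rw [← Preadditive.IsIso.comp_left_eq_zero e.inv]
    exact hε.eq_zero_of_comp_eq_zero hT ((suspended_suspObj P).shift hP')
      (hε.comp_eq_zero_of_shift hT hP' _)

end Cone

end

variable {C : Type u} [Category.{v} C] [Preadditive C] [HasZeroObject C]
  [HasShift C ℤ] [∀ n : ℤ, (CategoryTheory.shiftFunctor C n).Additive] [Pretriangulated C]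
  [HasBinaryBiproducts C]

/-- An object `P` is partial silting if and only if it is presilting and
`susp(P)` is an aisle (the inclusion admits a right adjoint, i.e. coreflections exist). -/
theorem statement4 (P : C) :
    PartialSilting P ↔ (Presilting P ∧ HasCoreflections (suspObj P)) := by
  constructor
  · rintro ⟨hPS, hsub⟩
    exact ⟨hsub P (suspObj_self P), hPS.hasCoreflections fun _ hY => perpLe_shift hY (by norm_num)⟩
  · rintro ⟨hP, hcor⟩
    have hS := suspended_suspObj P
    refine ⟨⟨hS.iso, perpLe_closedIso P 0, hS.zero,
      fun X Y hX hY => rightOrth_suspObj_of_perpLe hY X hX, fun X => ?_, hS.shift, hS.ext⟩,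
      fun X => suspObj_subset_perpGt hP⟩
    obtain ⟨A, ε, hε⟩ := hcor X
    obtain ⟨B, g, h, hT⟩ := distinguished_cocone_triangle ε
    exact ⟨A, B, ε, g, h, hT, hε.1, perpLe_of_isCoreflection hP hε hT⟩

end Paper
end

section
/- Let D be a triangulated category, P a partial silting object, and (U, U^⊥) a t-structure on D with susp(P) ⊆ U ⊆ P^{⊥_{>1}}. Then the perpendicular category P^{⊥_ℤ} = {X : Hom(P, Σ^i X) = 0 for all i ∈ ℤ} is a t-exact subcategory of D with respect to (U, U^⊥); in particular, (U ∩ P^{⊥_ℤ}, U^⊥ ∩ P^{⊥_ℤ}) is a t-structure on P^{⊥_ℤ}. -/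
open CategoryTheory Limits Pretriangulated ZeroObject

universe v u

namespace Paper

variable {C : Type u} [Category.{v} C] [Preadditive C] [HasZeroObject C]
  [HasShift C ℤ] [∀ n : ℤ, (CategoryTheory.shiftFunctor C n).Additive] [Pretriangulated C]
  [HasBinaryBiproducts C]

section Aux

lemma perpIso (P : C) {X Y : C} (e : X ≅ Y) (h : ∀ f : P ⟶ X, f = 0) :
    ∀ f : P ⟶ Y, f = 0 := fun f => by
  have : (f ≫ e.inv) ≫ e.hom = f := by simp
  rw [← this, h (f ≫ e.inv), zero_comp]

lemma perpExt (P : C) {T : Triangle C} (hT : T ∈ distTriang C)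
    (hh1 : ∀ f : P ⟶ T.obj₁, f = 0) (hh3 : ∀ f : P ⟶ T.obj₃, f = 0) :
    ∀ f : P ⟶ T.obj₂, f = 0 := fun f => by
  obtain ⟨g, hg⟩ := T.coyoneda_exact₂ hT f (by rw [hh3 (f ≫ T.mor₂)])
  rw [hg, hh1 g, zero_comp]

lemma perpExtShift (P : C) {T : Triangle C} (hT : T ∈ distTriang C) (i : ℤ)
    (hh1 : ∀ f : P ⟶ T.obj₁⟦i⟧, f = 0) (hh3 : ∀ f : P ⟶ T.obj₃⟦i⟧, f = 0) :
    ∀ f : P ⟶ T.obj₂⟦i⟧, f = 0 :=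
  perpExt P (Triangle.shift_distinguished T hT i) hh1 hh3

lemma unshiftZero (P B : C) (j : ℤ) (hU : ∀ g : P⟦-j⟧ ⟶ B, g = 0) (f : P ⟶ B⟦j⟧) :
    f = 0 := by
  apply (shiftFunctor C (-j)).map_injective
  have ha : f⟦-j⟧' ≫ (shiftFunctorCompIsoId C j (-j) (by ring)).hom.app B = 0 := hU _
  have hb := ha =≫ (shiftFunctorCompIsoId C j (-j) (by ring)).inv.app B
  simpa using hb

lemma suspShift (P : C) (m : ℤ) (hm : 0 ≤ m) : suspObj P (P⟦m⟧) := by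
  obtain ⟨n, rfl⟩ := Int.eq_ofNat_of_zero_le hm
  clear hm
  induction n with
  | zero => intro W hW hWP; exact hW.iso ((shiftFunctorZero C ℤ).app P).symm hWP
  | succ k ih =>
    intro W hW hWP
    have hk : W ((P⟦(k : ℤ)⟧)⟦(1 : ℤ)⟧) := hW.shift (ih W hW hWP)
    exact hW.iso
      (((shiftFunctorAdd' C (k : ℤ) 1 ((k + 1 : ℕ) : ℤ) (by push_cast; ring)).app P).symm) hk

end Aux

/-- For a partial silting `P` and a t-structure `(U, U^⊥)` with
`susp(P) ⊆ U ⊆ P^{⊥_{>1}}`, the subcategory `P^{⊥_ℤ}` is t-exact with respect to `(U, U^⊥)`;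
in particular `(U ∩ P^{⊥_ℤ}, U^⊥ ∩ P^{⊥_ℤ})` is a t-structure on `P^{⊥_ℤ}`. -/
theorem statement6 (P : C) (hP : PartialSilting P) (U V : C → Prop)
    (hUV : IsTStr U V) (hV : ∀ Y : C, V Y ↔ rightOrth U Y)
    (h1 : ∀ X : C, suspObj P X → U X) (h2 : ∀ X : C, U X → perpGt P 1 X) :
    (∀ (X A B : C) (f : A ⟶ X) (g : X ⟶ B) (h : B ⟶ A⟦(1:ℤ)⟧),
      perpZ P X → Triangle.mk f g h ∈ (distTriang C) → U A → V B →
      perpZ P A ∧ perpZ P B) ∧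
    (∀ X : C, perpZ P X →
      ∃ (A B : C) (f : A ⟶ X) (g : X ⟶ B) (h : B ⟶ A⟦(1:ℤ)⟧),
        Triangle.mk f g h ∈ (distTriang C) ∧ U A ∧ perpZ P A ∧ V B ∧ perpZ P B) := by
  have key : ∀ (X A B : C) (f : A ⟶ X) (g : X ⟶ B) (h : B ⟶ A⟦(1:ℤ)⟧),
      perpZ P X → Triangle.mk f g h ∈ (distTriang C) → U A → V B →
      perpZ P A ∧ perpZ P B := by
    intro X A B f g h hX hT hA hB
    have hB0 : ∀ j : ℤ, j ≤ 0 → ∀ φ : P ⟶ B⟦j⟧, φ = 0 := by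
      intro j hj φ
      refine unshiftZero P B j ?_ φ
      intro ψ
      exact (hV B).1 hB _ (h1 _ (suspShift P (-j) (by omega))) ψ
    have hAperp : perpZ P A := by
      intro i
      rcases lt_or_ge 1 i with hi | hi
      · exact h2 A hA i hi
      · have hinv := inv_rot_of_distTriang _ hT
        refine perpExtShift P hinv i ?_ ?_
        · exact perpIso P ((shiftFunctorAdd C (-1) i).app B)
            (fun φ => hB0 (-1 + i) (by omega) φ)
        · exact hX i
    refine ⟨hAperp, ?_⟩
    intro i
    have hrot := rot_of_distTriang _ hT
    refine perpExtShift P hrot i ?_ ?_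
    · exact hX i
    · exact perpIso P ((shiftFunctorAdd C 1 i).app A) (fun φ => hAperp (1 + i) φ)
  refine ⟨key, ?_⟩
  intro X hX
  obtain ⟨A, B, f, g, h, hT, hA, hB⟩ := hUV.trunc X
  obtain ⟨hAp, hBp⟩ := key X A B f g h hX hT hA ((hV B).2 (fun Z hZ φ => hUV.homZero hZ hB φ))
  exact ⟨A, B, f, g, h, hT, hA, hAp, (hV B).2 (fun Z hZ φ => hUV.homZero hZ hB φ), hBp⟩


end Paper
end

section
/- Let D be a triangulated category, P a partial silting object, and (U, U^⊥) a t-structure with susp(P) ⊆ U ⊆ P^{⊥_{>0}}. Then the intersection U ∩ P^{⊥_ℤ} equals the image σ_P^{>0}(U) = {σ_P^{>0}(X) : X ∈ U} of U under the truncation functor of the t-structure (susp(P), P^{⊥_{≤0}}). -/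
open CategoryTheory Limits Pretriangulated ZeroObject

universe v u

/-! If `Y ∈ U ∩ P^{⊥_ℤ}`, then `Y ∈ P^{⊥_{≤0}}` is its own truncation, with `A = 0`.
Conversely, rotating a truncation triangle `A → X → Y → ΣA` with `X ∈ U` and `A ∈ susp(P)`
exhibits `Y` as an extension of `ΣA` by `X`. Both lie in the aisle `U` and in `P^{⊥_{>0}}`, and
both classes are closed under extensions, so `Y ∈ U ∩ P^{⊥_{≤0}} ∩ P^{⊥_{>0}} = U ∩ P^{⊥_ℤ}`. -/

namespace Paper

section

variable {C : Type u} [Category.{v} C] [Preadditive C] [HasShift C ℤ]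

lemma perpGt_shift_one {P X : C} {m : ℤ} (hX : perpGt P m X) : perpGt P m (X⟦(1 : ℤ)⟧) := by
  intro i hi φ
  let e := (shiftFunctorAdd' C 1 i (1 + i) rfl).app X
  rw [← cancel_mono e.inv, zero_comp]
  exact hX (1 + i) (by omega) _

lemma perpZ_of_perpLe_of_perpGt {P Y : C} {m : ℤ} (hle : perpLe P m Y) (hgt : perpGt P m Y) :
    perpZ P Y :=
  fun i φ => (le_or_gt i m).elim (fun hi => hle i hi φ) (fun hi => hgt i hi φ)

end

variable {C : Type u} [Category.{v} C] [Preadditive C] [HasZeroObject C]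
  [HasShift C ℤ] [∀ n : ℤ, (CategoryTheory.shiftFunctor C n).Additive] [Pretriangulated C]

lemma hom_eq_zero_of_distTriang {T : Triangle C} (hT : T ∈ distTriang C) {P : C}
    (h₁ : ∀ f : P ⟶ T.obj₁, f = 0) (h₃ : ∀ f : P ⟶ T.obj₃, f = 0) (φ : P ⟶ T.obj₂) :
    φ = 0 := by
  obtain ⟨ψ, rfl⟩ := Triangle.coyoneda_exact₂ T hT φ (h₃ _)
  rw [h₁ ψ, zero_comp]

lemma perpGt_extClosed (P : C) (m : ℤ) : ExtClosed (perpGt P m) :=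
  fun T hT h₁ h₃ i hi =>
    hom_eq_zero_of_distTriang (Triangle.shift_distinguished T hT i) (h₁ i hi) (h₃ i hi)

lemma suspObj_zero (P : C) : suspObj P 0 := fun _ hU _ => hU.zero

variable [HasBinaryBiproducts C]

theorem statement7_general (P : C) (hP : PartialSilting P) (U V : C → Prop)
    (hUV : IsTStr U V)
    (h1 : ∀ X : C, suspObj P X → U X) (h2 : ∀ X : C, U X → perpGt P 0 X) :
    ∀ Y : C, (U Y ∧ perpZ P Y) ↔
      ∃ (X A : C) (f : A ⟶ X) (g : X ⟶ Y) (h : Y ⟶ A⟦(1:ℤ)⟧),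
        U X ∧ Triangle.mk f g h ∈ (distTriang C) ∧ suspObj P A ∧ perpLe P 0 Y := by
  intro Y
  constructor
  · rintro ⟨hUY, hZY⟩
    exact ⟨Y, 0, 0, 𝟙 Y, 0, hUY, contractible_distinguished₁ Y, suspObj_zero P,
      fun i _ => hZY i⟩
  · rintro ⟨X, A, f, g, h, hUX, hT, hA, hYle⟩
    have hT' := rot_of_distTriang _ hT
    exact ⟨hUV.extL _ hT' hUX (hUV.shiftL (h1 A hA)), perpZ_of_perpLe_of_perpGt hYle
      (perpGt_extClosed P 0 _ hT' (h2 X hUX) (perpGt_shift_one (hP.2 A hA)))⟩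

/-- For a partial silting `P` and a t-structure `(U, U^⊥)` with
`susp(P) ⊆ U ⊆ P^{⊥_{>0}}`, the intersection `U ∩ P^{⊥_ℤ}` coincides with the image
`σ_P^{>0}(U)` of `U` under the truncation of the t-structure `(susp(P), P^{⊥_{≤0}})`. -/
theorem statement7 (P : C) (hP : PartialSilting P) (U V : C → Prop)
    (hUV : IsTStr U V) (hV : ∀ Y : C, V Y ↔ rightOrth U Y)
    (h1 : ∀ X : C, suspObj P X → U X) (h2 : ∀ X : C, U X → perpGt P 0 X) :
    ∀ Y : C, (U Y ∧ perpZ P Y) ↔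
      ∃ (X A : C) (f : A ⟶ X) (g : X ⟶ Y) (h : Y ⟶ A⟦(1:ℤ)⟧),
        U X ∧ Triangle.mk f g h ∈ (distTriang C) ∧ suspObj P A ∧ perpLe P 0 Y :=
  statement7_general P hP U V hUV h1 h2

end Paper
end

section
/- Let D be a triangulated category with partial silting object P, and let X, Y, Z ∈ P^{⊥_{>0}} fit into a distinguished triangle X → Y → Z → ΣX. Then applying the truncation σ_P^{>0} yields a distinguished triangle σ_P^{>0}X → σ_P^{>0}Y → σ_P^{>0}Z → Σσ_P^{>0}X in P^{⊥_ℤ}; in particular the cone of σ_P^{>0}(f) is isomorphic to σ_P^{>0}Z. -/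
open CategoryTheory Limits Pretriangulated ZeroObject

universe v u

namespace Paper

variable {C : Type u} [Category.{v} C] [Preadditive C] [HasZeroObject C]
  [HasShift C ℤ] [∀ n : ℤ, (CategoryTheory.shiftFunctor C n).Additive] [Pretriangulated C]
  [HasBinaryBiproducts C]

/-!
For `V` in the co-aisle `P^{⊥_{≤0}}`, precomposition with a truncation map `W ⟶ σ_P^{>0} W` is a
bijection on `Hom(-, V)`, and so is precomposition with its suspension, because
`Hom(A, V) = Hom(ΣA, V) = Hom(Σ²A, V) = 0` for `A ∈ susp(P)`. The comparison map `c : Z ⟶ K` to the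
cone `K` of `σ_P^{>0}(u)`, given by a morphism of triangles, is therefore bijective on `Hom(-, V)`
by the five lemma. As `P^{⊥_ℤ}` is closed under cones, `K` lies in the co-aisle, so `c` and
`Z ⟶ σ_P^{>0} Z` are two reflections of `Z` into `P^{⊥_{≤0}}` and differ by an isomorphism.
-/

omit [Preadditive C] [HasZeroObject C] [HasShift C ℤ]
  [∀ n : ℤ, (CategoryTheory.shiftFunctor C n).Additive] [Pretriangulated C]
  [HasBinaryBiproducts C] in
lemma ObjectProperty.exists_iso_of_isLocal (Q : ObjectProperty C) {W B K : C} {g : W ⟶ B}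
    {c : W ⟶ K} (hg : Q.isLocal g) (hc : Q.isLocal c) (hB : Q B) (hK : Q K) :
    ∃ e : B ≅ K, g ≫ e.hom = c := by
  obtain ⟨s, hs⟩ := (hg K hK).2 c
  dsimp only at hs
  have : IsIso s :=
    (Q.isLocal_iff_isIso s hB hK).1 (MorphismProperty.of_precomp _ g s hg (hs ▸ hc))
  exact ⟨asIso s, hs⟩

section

omit [HasZeroObject C] [HasShift C ℤ] [∀ n : ℤ, (CategoryTheory.shiftFunctor C n).Additive]
  [Pretriangulated C] [HasBinaryBiproducts C]

lemma injective_precomp_iff {X Y : C} (f : X ⟶ Y) (V : C) :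
    Function.Injective (fun g : Y ⟶ V => f ≫ g) ↔ ∀ g : Y ⟶ V, f ≫ g = 0 → g = 0 :=
  injective_iff_map_eq_zero (Preadditive.leftComp V f)

lemma ObjectProperty.isLocal_neg_iff (Q : ObjectProperty C) {X Y : C} (f : X ⟶ Y) :
    Q.isLocal (-f) ↔ Q.isLocal f := by
  refine forall₂_congr fun V _ => ?_
  have : (fun g : Y ⟶ V => (-f) ≫ g) = Neg.neg ∘ fun g => f ≫ g := by
    funext g
    exact Preadditive.neg_comp _ _
  rw [this, Function.Bijective.of_comp_iff' neg_bijective]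

end

omit [HasZeroObject C] [∀ n : ℤ, (CategoryTheory.shiftFunctor C n).Additive]
  [Pretriangulated C] [HasBinaryBiproducts C] in
lemma hom_shift_shift_eq_zero {Q A : C} {i : ℤ} (h : ∀ f : Q ⟶ A⟦i + 1⟧, f = 0)
    (f : Q ⟶ A⟦i⟧⟦(1:ℤ)⟧) : f = 0 := by
  have e := (shiftFunctorAdd C i 1).app A
  simpa using congrArg (· ≫ e.hom) (h (f ≫ e.inv))

section

omit [HasBinaryBiproducts C]

lemma Triangle.yoneda_exact₁ {T : Triangle C} (hT : T ∈ distTriang C) {X : C}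
    (f : T.obj₁⟦(1:ℤ)⟧ ⟶ X) (hf : T.mor₃ ≫ f = 0) :
    ∃ g : T.obj₂⟦(1:ℤ)⟧ ⟶ X, f = T.mor₁⟦(1:ℤ)⟧' ≫ g := by
  obtain ⟨g, hg⟩ := Triangle.yoneda_exact₃ _ (rot_of_distTriang _ hT) f hf
  exact ⟨-g, hg.trans ((Preadditive.neg_comp _ _).trans (Preadditive.comp_neg _ _).symm)⟩

lemma distinguished_mk_of_iso₃ {X Y K B : C} {u : X ⟶ Y} {v : Y ⟶ K} {w : K ⟶ X⟦(1:ℤ)⟧}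
    (hT : Triangle.mk u v w ∈ distTriang C) (e : B ≅ K) :
    Triangle.mk u (v ≫ e.inv) (e.hom ≫ w) ∈ distTriang C := by
  refine isomorphic_distinguished _ hT _ (Triangle.isoMk _ _ (Iso.refl X) (Iso.refl Y) e ?_ ?_ ?_)
  · exact (Category.comp_id u).trans (Category.id_comp u).symm
  · change (v ≫ e.inv) ≫ e.hom = 𝟙 Y ≫ v
    simp
  · change (e.hom ≫ w) ≫ (𝟙 X)⟦(1:ℤ)⟧' = e.hom ≫ w
    simp

lemma hom_obj₃_eq_zero {T : Triangle C} (hT : T ∈ distTriang C) {Q : C}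
    (h₂ : ∀ f : Q ⟶ T.obj₂, f = 0) (h₁ : ∀ f : Q ⟶ T.obj₁⟦(1:ℤ)⟧, f = 0)
    (f : Q ⟶ T.obj₃) : f = 0 := by
  obtain ⟨g, rfl⟩ := Triangle.coyoneda_exact₃ T hT f (h₁ _)
  rw [h₂ g, zero_comp]

lemma isLocal_mor₂_of_distTriang (Q : ObjectProperty C) {T : Triangle C}
    (hT : T ∈ distTriang C) (h₁ : ∀ V, Q V → ∀ f : T.obj₁ ⟶ V, f = 0)
    (h₁' : ∀ V, Q V → ∀ f : T.obj₁⟦(1:ℤ)⟧ ⟶ V, f = 0) : Q.isLocal T.mor₂ := by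
  intro V hV
  refine ⟨(injective_precomp_iff _ _).2 fun g hg => ?_, fun g => ?_⟩
  · obtain ⟨χ, rfl⟩ := Triangle.yoneda_exact₃ T hT g hg
    rw [h₁' V hV χ, comp_zero]
  · obtain ⟨χ, hχ⟩ := Triangle.yoneda_exact₂ T hT g (h₁ V hV _)
    exact ⟨χ, hχ.symm⟩

section FiveLemma

variable {T T' : Triangle C} (φ : T ⟶ T') (hT : T ∈ distTriang C) (hT' : T' ∈ distTriang C)
  (V : C)

include hT hT' in
lemma injective_precomp_hom₃
    (h₂ : Function.Injective (fun g : T'.obj₂ ⟶ V => φ.hom₂ ≫ g))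
    (h₁' : Function.Injective (fun g : T'.obj₁⟦(1:ℤ)⟧ ⟶ V => φ.hom₁⟦(1:ℤ)⟧' ≫ g))
    (h₂' : Function.Surjective (fun g : T'.obj₂⟦(1:ℤ)⟧ ⟶ V => φ.hom₂⟦(1:ℤ)⟧' ≫ g)) :
    Function.Injective (fun g : T'.obj₃ ⟶ V => φ.hom₃ ≫ g) := by
  rw [injective_precomp_iff] at h₂ h₁' ⊢
  intro a ha
  obtain ⟨b, rfl⟩ := Triangle.yoneda_exact₃ T' hT' a
    (h₂ _ (by rw [← Category.assoc, ← φ.comm₂, Category.assoc, ha, comp_zero]))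
  obtain ⟨d, hd⟩ := Triangle.yoneda_exact₁ hT (φ.hom₁⟦(1:ℤ)⟧' ≫ b)
    (by rw [φ.comm₃_assoc, ha])
  obtain ⟨d', rfl⟩ := h₂' d
  have hb : φ.hom₁⟦(1:ℤ)⟧' ≫ (b - T'.mor₁⟦(1:ℤ)⟧' ≫ d') = 0 := by
    rw [Preadditive.comp_sub, hd, ← Functor.map_comp_assoc, φ.comm₁, Functor.map_comp_assoc,
      sub_self]
  rw [sub_eq_zero.1 (h₁' _ hb), comp_distTriang_mor_zero₃₁_assoc _ hT', zero_comp]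

include hT hT' in
lemma surjective_precomp_hom₃
    (h₁ : Function.Injective (fun g : T'.obj₁ ⟶ V => φ.hom₁ ≫ g))
    (h₂ : Function.Surjective (fun g : T'.obj₂ ⟶ V => φ.hom₂ ≫ g))
    (h₁' : Function.Surjective (fun g : T'.obj₁⟦(1:ℤ)⟧ ⟶ V => φ.hom₁⟦(1:ℤ)⟧' ≫ g)) :
    Function.Surjective (fun g : T'.obj₃ ⟶ V => φ.hom₃ ≫ g) := by
  rw [injective_precomp_iff] at h₁
  intro x
  obtain ⟨y, hy⟩ := h₂ (T.mor₂ ≫ x)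
  dsimp only at hy
  obtain ⟨a, rfl⟩ := Triangle.yoneda_exact₂ T' hT' y (h₁ _ (by
    rw [← Category.assoc, ← φ.comm₁, Category.assoc, hy,
      comp_distTriang_mor_zero₁₂_assoc _ hT, zero_comp]))
  obtain ⟨e, he⟩ := Triangle.yoneda_exact₃ T hT (x - φ.hom₃ ≫ a) (by
    rw [Preadditive.comp_sub, ← hy, φ.comm₂_assoc, sub_self])
  obtain ⟨e', rfl⟩ := h₁' e
  refine ⟨a + T'.mor₃ ≫ e', ?_⟩
  dsimp only at he ⊢
  rw [Preadditive.comp_add, ← φ.comm₃_assoc, ← he, add_sub_cancel]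

include hT hT' in
lemma isLocal_hom₃ (Q : ObjectProperty C) (h₁ : Q.isLocal φ.hom₁) (h₂ : Q.isLocal φ.hom₂)
    (h₁' : Q.isLocal (φ.hom₁⟦(1:ℤ)⟧')) (h₂' : Q.isLocal (φ.hom₂⟦(1:ℤ)⟧')) :
    Q.isLocal φ.hom₃ := fun V hV =>
  ⟨injective_precomp_hom₃ φ hT hT' V (h₂ V hV).1 (h₁' V hV).1 (h₂' V hV).2,
    surjective_precomp_hom₃ φ hT hT' V (h₁ V hV).1 (h₂ V hV).2 (h₁' V hV).2⟩

end FiveLemma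

section TStructure

variable {L G : C → Prop} (hLG : IsTStr L G) {A W B : C} {f : A ⟶ W} {g : W ⟶ B}
  {h : B ⟶ A⟦(1:ℤ)⟧} (hT : Triangle.mk f g h ∈ distTriang C) (hA : L A)

include hLG hT hA

lemma IsTStr.isLocal_of_distTriang : ObjectProperty.isLocal G g :=
  isLocal_mor₂_of_distTriang G hT (fun _ hV => hLG.homZero hA hV)
    (fun _ hV => hLG.homZero (hLG.shiftL hA) hV)

lemma IsTStr.isLocal_shift_of_distTriang : ObjectProperty.isLocal G (g⟦(1:ℤ)⟧') :=
  (ObjectProperty.isLocal_neg_iff _ _).1 <| hLG.isLocal_of_distTriang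
    (rot_of_distTriang _ (rot_of_distTriang _ (rot_of_distTriang _ hT))) (hLG.shiftL hA)

end TStructure

variable {P : C}

lemma perpZ_obj₃_of_distTriang {T : Triangle C} (hT : T ∈ distTriang C)
    (h₁ : perpZ P T.obj₁) (h₂ : perpZ P T.obj₂) : perpZ P T.obj₃ := fun i =>
  hom_obj₃_eq_zero (Triangle.shift_distinguished T hT i) (h₂ i)
    (hom_shift_shift_eq_zero (h₁ (i + 1)))

lemma PartialSilting.perpZ_of_distTriang (hP : PartialSilting P) {A W B : C} {f : A ⟶ W}
    {g : W ⟶ B} {h : B ⟶ A⟦(1:ℤ)⟧} (hT : Triangle.mk f g h ∈ distTriang C)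
    (hA : suspObj P A) (hW : perpGt P 0 W) (hB : perpLe P 0 B) : perpZ P B := by
  intro i
  rcases le_or_gt i 0 with hi | hi
  · exact hB i hi
  · exact hom_obj₃_eq_zero (Triangle.shift_distinguished _ hT i) (hW i hi)
      (hom_shift_shift_eq_zero (hP.2 A hA (i + 1) (by omega)))

end

/-- Applying the truncation `σ_P^{>0}` to a distinguished triangle with all
three terms in `P^{⊥_{>0}}` yields a distinguished triangle in `P^{⊥_ℤ}`; in particular the cone
of `σ_P^{>0}(u)` is isomorphic to `σ_P^{>0}Z`. -/
theorem statement8 (P : C) (hP : PartialSilting P)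
    (X Y Z : C) (u : X ⟶ Y) (v : Y ⟶ Z) (w : Z ⟶ X⟦(1:ℤ)⟧)
    (hT : Triangle.mk u v w ∈ (distTriang C))
    (hX : perpGt P 0 X) (hY : perpGt P 0 Y) (hZ : perpGt P 0 Z)
    -- truncation triangles for X, Y and Z
    (AX BX : C) (fX : AX ⟶ X) (gX : X ⟶ BX) (hX' : BX ⟶ AX⟦(1:ℤ)⟧)
    (hTX : Triangle.mk fX gX hX' ∈ (distTriang C)) (hAX : suspObj P AX) (hBX : perpLe P 0 BX)
    (AY BY : C) (fY : AY ⟶ Y) (gY : Y ⟶ BY) (hY' : BY ⟶ AY⟦(1:ℤ)⟧)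
    (hTY : Triangle.mk fY gY hY' ∈ (distTriang C)) (hAY : suspObj P AY) (hBY : perpLe P 0 BY)
    (AZ BZ : C) (fZ : AZ ⟶ Z) (gZ : Z ⟶ BZ) (hZ' : BZ ⟶ AZ⟦(1:ℤ)⟧)
    (hTZ : Triangle.mk fZ gZ hZ' ∈ (distTriang C)) (hAZ : suspObj P AZ) (hBZ : perpLe P 0 BZ)
    -- the induced morphism `σ_P^{>0}(u)`
    (u' : BX ⟶ BY) (hu' : gX ≫ u' = u ≫ gY) :
    perpZ P BX ∧ perpZ P BY ∧ perpZ P BZ ∧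
    ∃ (v' : BY ⟶ BZ) (w' : BZ ⟶ BX⟦(1:ℤ)⟧),
      Triangle.mk u' v' w' ∈ (distTriang C) ∧ gY ≫ v' = v ≫ gZ := by
  have hLG := hP.1
  have pzBX := hP.perpZ_of_distTriang hTX hAX hX hBX
  have pzBY := hP.perpZ_of_distTriang hTY hAY hY hBY
  refine ⟨pzBX, pzBY, hP.perpZ_of_distTriang hTZ hAZ hZ hBZ, ?_⟩
  obtain ⟨K, v₀, w₀, hTK⟩ := distinguished_cocone_triangle u'
  have hK : perpLe P 0 K := fun i _ => perpZ_obj₃_of_distTriang hTK pzBX pzBY i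
  obtain ⟨c, hc₂, hc₃⟩ := complete_distinguished_triangle_morphism _ _ hT hTK gX gY hu'.symm
  change Z ⟶ K at c
  replace hc₂ : v ≫ c = gY ≫ v₀ := hc₂
  have hc : ObjectProperty.isLocal (perpLe P 0) c :=
    isLocal_hom₃ (Triangle.homMk (Triangle.mk u v w) (Triangle.mk u' v₀ w₀) gX gY c
        hu'.symm hc₂ hc₃) hT hTK _
      (hLG.isLocal_of_distTriang hTX hAX) (hLG.isLocal_of_distTriang hTY hAY)
      (hLG.isLocal_shift_of_distTriang hTX hAX) (hLG.isLocal_shift_of_distTriang hTY hAY)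
  obtain ⟨e, he⟩ := ObjectProperty.exists_iso_of_isLocal _
    (hLG.isLocal_of_distTriang hTZ hAZ) hc hBZ hK
  refine ⟨v₀ ≫ e.inv, e.hom ≫ w₀, distinguished_mk_of_iso₃ hTK e, ?_⟩
  rw [← Category.assoc, ← hc₂, ← he]
  simp

end Paper
end
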